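/- arXiv:2604.27446 — 9 statements merged into one kernel-verified Lean document; each statement's English description precedes it below -/
import Mathlib

section
/- Let A be an infinite {0,1}-matrix and c : ℕ → {0,1}. Suppose for a fixed n that A(i, n+1) = c_i for all i = 1,...,n+1 (i.e. including the diagonal condition A(n+1,n+1) = c_{n+1}). Then the homomorphism φ_{n,n+1} : Coker([I_n − A_n^t; −C_n^t] : ℤ^n → ℤ^{n+1}) → Coker([I_{n+1} − A_{n+1}^t; −C_{n+1}^t] : ℤ^{n+1} → ℤ^{n+2}) induced by (y_1,...,y_{n+1}) ↦ (y_1,...,y_{n+1}, y_{n+1}) is a group isomorphism. -/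
open Matrix
open Matrix

/-- The (m+1)×m integer matrix `[I_m − A_m^t; −C_m^t]`: top m rows form
`I_m − A_m^t` (where `A_m` is the upper-left m×m corner of the infinite
matrix `A`) and bottom row is `(−c 0, …, −c (m-1))`.  (0-based indexing.) -/
def TMat (A : ℕ → ℕ → ℤ) (c : ℕ → ℤ) (m : ℕ) :
    Matrix (Fin (m + 1)) (Fin m) ℤ :=
  Matrix.of fun i j =>
    if (i : ℕ) < m then (if (i : ℕ) = (j : ℕ) then 1 else 0) - A (j : ℕ) (i : ℕ)
    else -c (j : ℕ)

/-- The linear map ℤ^{n+1} → ℤ^{n+2} duplicating the last coordinate: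
`(y_1,…,y_{n+1}) ↦ (y_1,…,y_{n+1},y_{n+1})`. -/
def dupLast (n : ℕ) : (Fin (n + 1) → ℤ) →ₗ[ℤ] (Fin (n + 2) → ℤ) :=
  LinearMap.funLeft ℤ ℤ fun k : Fin (n + 2) =>
    if h : (k : ℕ) < n + 1 then ⟨k, h⟩ else ⟨n, Nat.lt_succ_self n⟩

lemma TMat_apply (A : ℕ → ℕ → ℤ) (c : ℕ → ℤ) (m : ℕ) (i : Fin (m + 1)) (j : Fin m) :
    TMat A c m i j =
      if (i : ℕ) < m then (if (i : ℕ) = (j : ℕ) then 1 else 0) - A (j : ℕ) (i : ℕ)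
      else -c (j : ℕ) := rfl

lemma dupLast_apply (n : ℕ) (x : Fin (n + 1) → ℤ) (k : Fin (n + 2)) :
    dupLast n x k = x (if h : (k : ℕ) < n + 1 then ⟨k, h⟩ else ⟨n, Nat.lt_succ_self n⟩) := rfl

lemma dupLast_injective (n : ℕ) : Function.Injective (dupLast n) := by
  intro a b h
  funext i
  have := congrFun h (Fin.castSucc i)
  simpa [dupLast_apply, i.isLt, Fin.castSucc] using this

lemma key_snoc (A : ℕ → ℕ → ℤ) (c : ℕ → ℤ) (n : ℕ)
    (hDRS : ∀ i < n + 1, A i n = c i) (v : Fin n → ℤ) :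
    dupLast n ((TMat A c n).mulVec v) = (TMat A c (n + 1)).mulVec (Fin.snoc v 0) := by
  funext k
  rw [dupLast_apply]
  simp only [Matrix.mulVec, dotProduct]
  rw [Fin.sum_univ_castSucc]
  simp only [Fin.snoc_castSucc, Fin.snoc_last, mul_zero, add_zero]
  split_ifs with h
  · refine Finset.sum_congr rfl fun j _ => ?_
    have hj : (j : ℕ) < n := j.isLt
    rw [TMat_apply, TMat_apply]
    simp only [Fin.coe_castSucc]
    rcases Nat.lt_or_ge (k : ℕ) n with hk | hk
    · rw [if_pos hk, if_pos (by omega : (k : ℕ) < n + 1)]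
    · have hkn : (k : ℕ) = n := by omega
      rw [if_neg (by omega), if_pos (by omega : (k : ℕ) < n + 1),
        if_neg (by omega : ¬ (k : ℕ) = (j : ℕ)), hkn, hDRS _ (by omega)]
      ring
  · have hk : (k : ℕ) = n + 1 := by omega
    refine Finset.sum_congr rfl fun j _ => ?_
    rw [TMat_apply, TMat_apply]
    simp only [Fin.coe_castSucc]
    rw [if_neg (by omega : ¬ (n : ℕ) < n), if_neg (by omega : ¬ (k : ℕ) < n + 1)]

theorem stmt2 (A : ℕ → ℕ → ℤ) (c : ℕ → ℤ)
    (hA : ∀ i j, A i j = 0 ∨ A i j = 1) (hc : ∀ i, c i = 0 ∨ c i = 1)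
    (n : ℕ) (hDRS : ∀ i < n + 1, A i n = c i) :
    ∃ φ : ((Fin (n + 1) → ℤ) ⧸ LinearMap.range (TMat A c n).mulVecLin) ≃ₗ[ℤ]
        ((Fin (n + 2) → ℤ) ⧸ LinearMap.range (TMat A c (n + 1)).mulVecLin),
      ∀ y : Fin (n + 1) → ℤ,
        φ (Submodule.Quotient.mk y) = Submodule.Quotient.mk (dupLast n y) := by
  set p1 := LinearMap.range (TMat A c n).mulVecLin
  set p2 := LinearMap.range (TMat A c (n + 1)).mulVecLin
  set f : (Fin (n + 1) → ℤ) →ₗ[ℤ] ((Fin (n + 2) → ℤ) ⧸ p2) := p2.mkQ ∘ₗ dupLast n with hf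
  -- the kernel of f is exactly p1
  have hker : LinearMap.ker f = p1 := by
    ext y
    constructor
    · intro hy
      have : dupLast n y ∈ p2 := by
        simpa [hf, LinearMap.mem_ker, Submodule.Quotient.mk_eq_zero] using hy
      obtain ⟨v, hv⟩ := this
      have hv' : (TMat A c (n + 1)).mulVec v = dupLast n y := hv
      -- last entry of v vanishes
      have hlast : v (Fin.last n) = 0 := by
        have e1 : ∀ j : Fin (n + 1),
            TMat A c (n + 1) ⟨n, by omega⟩ j * v j
              = -c (j : ℕ) * v j + (if j = Fin.last n then v j else 0) := by
          intro j
          rw [TMat_apply]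
          simp only [Fin.val_mk]
          by_cases hj : j = Fin.last n
          · subst hj
            simp only [Fin.val_last]
            rw [if_pos (Nat.lt_succ_self n), if_true, if_true, hDRS n (by omega)]
            ring
          · have hjn : (j : ℕ) ≠ n := by
              intro h; exact hj (Fin.ext (by simpa [Fin.val_last] using h))
            rw [if_pos (Nat.lt_succ_self n), if_neg (Ne.symm hjn), if_neg hj,
              hDRS _ j.isLt]
            ring
        have e2 : ∀ j : Fin (n + 1),
            TMat A c (n + 1) ⟨n + 1, by omega⟩ j * v j = -c (j : ℕ) * v j := by
          intro j
          rw [TMat_apply]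
          simp only [Fin.val_mk]
          rw [if_neg (by omega : ¬ n + 1 < n + 1)]
        have h12 : (TMat A c (n + 1) *ᵥ v) ⟨n, by omega⟩
            = (TMat A c (n + 1) *ᵥ v) ⟨n + 1, by omega⟩ := by
          rw [hv', dupLast_apply, dupLast_apply]
          congr 1
          rw [dif_pos (Nat.lt_succ_self n), dif_neg (show ¬ n + 1 < n + 1 by omega)]
        simp only [Matrix.mulVec, dotProduct] at h12
        rw [Finset.sum_congr rfl fun j _ => e1 j, Finset.sum_add_distrib,
          Finset.sum_ite_eq' Finset.univ (Fin.last n),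
          Finset.sum_congr rfl fun j _ => e2 j] at h12
        simp only [Finset.mem_univ, if_true] at h12
        linarith [h12]
      have hvsnoc : v = Fin.snoc (Fin.init v) 0 := by
        rw [← hlast]; exact (Fin.snoc_init_self v).symm
      have : dupLast n ((TMat A c n).mulVec (Fin.init v)) = dupLast n y := by
        rw [key_snoc A c n hDRS, ← hvsnoc, hv']
      exact ⟨Fin.init v, dupLast_injective n this⟩
    · rintro ⟨v, rfl⟩
      have : dupLast n ((TMat A c n).mulVecLin v) ∈ p2 :=
        ⟨Fin.snoc v 0, (key_snoc A c n hDRS v).symm⟩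
      simpa [hf, LinearMap.mem_ker, Submodule.Quotient.mk_eq_zero] using this
  have hle : p1 ≤ LinearMap.ker f := le_of_eq hker.symm
  set φ0 := p1.liftQ f hle with hφ0
  have hinj : Function.Injective φ0 := by
    rw [← LinearMap.ker_eq_bot, Submodule.ker_liftQ_eq_bot _ _ _ (le_of_eq hker)]
  have hsurj : Function.Surjective φ0 := by
    intro xq
    obtain ⟨x, rfl⟩ := Submodule.Quotient.mk_surjective p2 xq
    obtain ⟨t, ht⟩ : ∃ t : ℤ, t = x ⟨n + 1, by omega⟩ - x ⟨n, by omega⟩ := ⟨_, rfl⟩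
    set y : Fin (n + 1) → ℤ :=
      fun i => x (Fin.castSucc i) + t * TMat A c (n + 1) (Fin.castSucc i) (Fin.last n) with hy
    refine ⟨Submodule.Quotient.mk y, ?_⟩
    have hstep : φ0 (Submodule.Quotient.mk y) = Submodule.Quotient.mk (dupLast n y) := rfl
    rw [hstep, Submodule.Quotient.eq]
    refine ⟨t • Pi.single (Fin.last n) 1, ?_⟩
    have hcol : ∀ k, (TMat A c (n + 1)).mulVecLin (t • Pi.single (Fin.last n) 1) k
        = t * TMat A c (n + 1) k (Fin.last n) := by
      intro k
      simp only [Matrix.mulVecLin_apply, Matrix.mulVec, dotProduct, Pi.smul_apply,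
        smul_eq_mul]
      rw [Finset.sum_congr rfl (fun j _ => by
        rw [Pi.single_apply, mul_ite, mul_ite, mul_one, mul_zero, mul_zero])]
      rw [Finset.sum_ite_eq' Finset.univ (Fin.last n)
        (fun j => TMat A c (n + 1) k j * t)]
      simp [mul_comm]
    funext k
    rw [hcol]
    simp only [Pi.sub_apply, dupLast_apply]
    rcases Nat.lt_or_ge (k : ℕ) (n + 1) with hk | hk
    · have hcast : Fin.castSucc (⟨(k : ℕ), hk⟩ : Fin (n + 1)) = k := by
        ext; rfl
      rw [dif_pos hk]
      simp only [hy, hcast]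
      ring
    · have hk2 : (k : ℕ) = n + 1 := by omega
      rw [dif_neg (by omega)]
      simp only [hy]
      have hcast : Fin.castSucc (⟨n, Nat.lt_succ_self n⟩ : Fin (n + 1))
          = (⟨n, by omega⟩ : Fin (n + 2)) := rfl
      rw [hcast]
      have hxk : x k = x ⟨n + 1, by omega⟩ := by
        congr 1
        exact Fin.ext (by simp [hk2])
      have hkk : TMat A c (n + 1) k (Fin.last n) = -c n := by
        rw [TMat_apply, if_neg (by omega)]; simp [Fin.val_last]
      have hnn : TMat A c (n + 1) (⟨n, by omega⟩ : Fin (n + 2)) (Fin.last n)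
          = 1 - c n := by
        rw [TMat_apply]
        simp only [Fin.val_mk, Fin.val_last]
        rw [if_pos (Nat.lt_succ_self n), if_true, hDRS n (by omega)]
      rw [hkk, hnn, hxk]
      linear_combination -ht
  refine ⟨LinearEquiv.ofBijective φ0 ⟨hinj, hsurj⟩, fun y => rfl⟩
end

section
/- Let A be an infinite {0,1}-matrix and c : ℕ → {0,1}. Suppose A(i, n+1) = c_i for all i = 1,...,n+1. Then the map φ : Ker([I_n − A_n^t; −C_n^t]) → Ker([I_{n+1} − A_{n+1}^t; −C_{n+1}^t]) given by appending a zero coordinate, (x_1,...,x_n) ↦ (x_1,...,x_n,0), is a group isomorphism: every element of Ker([I_{n+1} − A_{n+1}^t; −C_{n+1}^t]) has last coordinate zero, and its first n coordinates lie in Ker([I_n − A_n^t; −C_n^t]). -/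
/-!
Write `T m = TMat A c m`. Since `A i n = c i` for `i ≤ n`, row `n` of `T (n + 1)` is the
coordinate functional `y ↦ y n` plus the last row of `T (n + 1)`; hence every kernel vector
has last coordinate `0`. On vectors `Fin.snoc x 0`, `T (n + 1)` acts as `T n` with its last
row repeated, so appending a zero identifies the two kernels.
-/

open Matrix
open Matrix

def snocZeroLinearMap (R : Type*) [Semiring R] (n : ℕ) : (Fin n → R) →ₗ[R] (Fin (n + 1) → R) where
  toFun x := Fin.snoc x 0
  map_add' x y := by ext i; induction i using Fin.lastCases <;> simp
  map_smul' r x := by ext i; induction i using Fin.lastCases <;> simp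

theorem snocZeroLinearMap_injective (R : Type*) [Semiring R] (n : ℕ) :
    Function.Injective (snocZeroLinearMap R n) :=
  fun x y h => by simpa [snocZeroLinearMap] using congrArg Fin.init h

section
variable (A : ℕ → ℕ → ℤ) (c : ℕ → ℤ)

theorem TMat_mulVec_castSucc {m : ℕ} (x : Fin m → ℤ) (i : Fin m) :
    (TMat A c m *ᵥ x) i.castSucc = x i - ∑ j : Fin m, A j i * x j := by
  simp [TMat, mulVec, dotProduct, sub_mul, Finset.sum_sub_distrib, ite_mul, Fin.val_eq_val]

theorem TMat_mulVec_last {m : ℕ} (x : Fin m → ℤ) :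
    (TMat A c m *ᵥ x) (Fin.last m) = -∑ j : Fin m, c j * x j := by
  simp [TMat, mulVec, dotProduct]

variable {A c} {n : ℕ}

theorem TMat_succ_mulVec_castSucc_last (hAc : ∀ i < n + 1, A i n = c i)
    (y : Fin (n + 1) → ℤ) :
    (TMat A c (n + 1) *ᵥ y) (Fin.last n).castSucc =
      y (Fin.last n) + (TMat A c (n + 1) *ᵥ y) (Fin.last (n + 1)) := by
  rw [TMat_mulVec_castSucc, TMat_mulVec_last, sub_eq_add_neg]
  congr 2
  exact Finset.sum_congr rfl fun j _ => by rw [Fin.val_last, hAc j j.isLt]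

theorem last_eq_zero_of_TMat_succ_mulVec_eq_zero (hAc : ∀ i < n + 1, A i n = c i)
    {y : Fin (n + 1) → ℤ} (hy : TMat A c (n + 1) *ᵥ y = 0) : y (Fin.last n) = 0 := by
  simpa [hy, eq_comm] using TMat_succ_mulVec_castSucc_last hAc y

theorem TMat_succ_mulVec_snoc_zero (hAc : ∀ i < n + 1, A i n = c i) (x : Fin n → ℤ) :
    TMat A c (n + 1) *ᵥ Fin.snoc x 0 =
      Fin.snoc (TMat A c n *ᵥ x) ((TMat A c n *ᵥ x) (Fin.last n)) := by
  ext i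
  induction i using Fin.lastCases with
  | last => simp [TMat_mulVec_last, Fin.sum_univ_castSucc]
  | cast i =>
    induction i using Fin.lastCases with
    | last =>
      rw [TMat_succ_mulVec_castSucc_last hAc]
      simp [TMat_mulVec_last, Fin.sum_univ_castSucc]
    | cast i => simp [TMat_mulVec_castSucc, Fin.sum_univ_castSucc]

theorem TMat_succ_mulVec_snoc_zero_eq_zero_iff (hAc : ∀ i < n + 1, A i n = c i)
    (x : Fin n → ℤ) : TMat A c (n + 1) *ᵥ Fin.snoc x 0 = 0 ↔ TMat A c n *ᵥ x = 0 := by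
  rw [TMat_succ_mulVec_snoc_zero hAc]
  refine ⟨fun h => funext fun i => by simpa using congrFun h i.castSucc, fun h => ?_⟩
  ext i
  induction i using Fin.lastCases <;> simp [h]

theorem TMat_succ_mulVec_eq_zero_iff (hAc : ∀ i < n + 1, A i n = c i) (y : Fin (n + 1) → ℤ) :
    TMat A c (n + 1) *ᵥ y = 0 ↔ y (Fin.last n) = 0 ∧ TMat A c n *ᵥ Fin.init y = 0 := by
  constructor
  · intro hy
    have hlast := last_eq_zero_of_TMat_succ_mulVec_eq_zero hAc hy
    refine ⟨hlast, (TMat_succ_mulVec_snoc_zero_eq_zero_iff hAc _).1 ?_⟩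
    rwa [← hlast, Fin.snoc_init_self]
  · rintro ⟨hlast, hinit⟩
    rw [← Fin.snoc_init_self y, hlast]
    exact (TMat_succ_mulVec_snoc_zero_eq_zero_iff hAc _).2 hinit

end

theorem stmt4_general (A : ℕ → ℕ → ℤ) (c : ℕ → ℤ)
    (n : ℕ) (hDRS : ∀ i < n + 1, A i n = c i) :
    -- appending a zero coordinate maps Ker into Ker
    (∀ x : Fin n → ℤ, (TMat A c n).mulVec x = 0 →
      (TMat A c (n + 1)).mulVec (Fin.snoc x 0) = 0) ∧
    -- every element of the bigger kernel has last coordinate zero and its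
    -- first n coordinates lie in the smaller kernel
    (∀ y : Fin (n + 1) → ℤ, (TMat A c (n + 1)).mulVec y = 0 →
      y (Fin.last n) = 0 ∧ (TMat A c n).mulVec (fun i => y i.castSucc) = 0) ∧
    -- hence appending zero gives a group isomorphism of kernels
    ∃ e : LinearMap.ker (TMat A c n).mulVecLin ≃ₗ[ℤ]
        LinearMap.ker (TMat A c (n + 1)).mulVecLin,
      ∀ x : LinearMap.ker (TMat A c n).mulVecLin,
        (e x : Fin (n + 1) → ℤ) = Fin.snoc (x : Fin n → ℤ) 0 := by
  have hsnoc := TMat_succ_mulVec_snoc_zero_eq_zero_iff hDRS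
  have hker := TMat_succ_mulVec_eq_zero_iff hDRS
  refine ⟨fun x => (hsnoc x).2, fun y => (hker y).1, ?_⟩
  let f : LinearMap.ker (TMat A c n).mulVecLin →ₗ[ℤ] LinearMap.ker (TMat A c (n + 1)).mulVecLin :=
    (snocZeroLinearMap ℤ n).restrict fun x hx => (hsnoc x).2 hx
  refine ⟨LinearEquiv.ofBijective f ⟨fun x y hxy => ?_, fun y => ?_⟩, fun x => rfl⟩
  · exact Subtype.ext (snocZeroLinearMap_injective ℤ n (congrArg Subtype.val hxy))
  · obtain ⟨hlast, hinit⟩ := (hker y).1 y.2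
    refine ⟨⟨Fin.init (y : Fin (n + 1) → ℤ), by exact hinit⟩, Subtype.ext ?_⟩
    change Fin.snoc (Fin.init (y : Fin (n + 1) → ℤ)) 0 = y
    rw [← hlast, Fin.snoc_init_self]

theorem stmt4 (A : ℕ → ℕ → ℤ) (c : ℕ → ℤ)
    (hA : ∀ i j, A i j = 0 ∨ A i j = 1) (hc : ∀ i, c i = 0 ∨ c i = 1)
    (n : ℕ) (hDRS : ∀ i < n + 1, A i n = c i) :
    -- appending a zero coordinate maps Ker into Ker
    (∀ x : Fin n → ℤ, (TMat A c n).mulVec x = 0 →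
      (TMat A c (n + 1)).mulVec (Fin.snoc x 0) = 0) ∧
    -- every element of the bigger kernel has last coordinate zero and its
    -- first n coordinates lie in the smaller kernel
    (∀ y : Fin (n + 1) → ℤ, (TMat A c (n + 1)).mulVec y = 0 →
      y (Fin.last n) = 0 ∧ (TMat A c n).mulVec (fun i => y i.castSucc) = 0) ∧
    -- hence appending zero gives a group isomorphism of kernels
    ∃ e : LinearMap.ker (TMat A c n).mulVecLin ≃ₗ[ℤ]
        LinearMap.ker (TMat A c (n + 1)).mulVecLin,
      ∀ x : LinearMap.ker (TMat A c n).mulVecLin,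
        (e x : Fin (n + 1) → ℤ) = Fin.snoc (x : Fin n → ℤ) 0 :=
  stmt4_general A c n hDRS
end

section
/- Let A be an infinite {0,1}-matrix and c : ℕ → {0,1}, and suppose A(i, n+1) = c_i for all i = 1,...,n+1 (including the diagonal condition). Then the homomorphism I^s_{n+1,n} : Coker(I_{n+1} − Ã_{C_{n+1}}) → Coker(I_n − Ã_{C_n}) induced by forgetting the last coordinate is an isomorphism. -/
open Matrix

/-- The m×m integer matrix `Ã_{C_m}` with entries `Ã(i,j) = A(i,j) − c_i`,
for the upper-left m×m corner of the infinite matrix `A` (0-based). -/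
def AtilC (A : ℕ → ℕ → ℤ) (c : ℕ → ℤ) (m : ℕ) :
    Matrix (Fin m) (Fin m) ℤ :=
  Matrix.of fun i j => A (i : ℕ) (j : ℕ) - c (i : ℕ)

/-- The linear map ℤ^{n+1} → ℤ^n forgetting the last coordinate. -/
def resLast (n : ℕ) : (Fin (n + 1) → ℤ) →ₗ[ℤ] (Fin n → ℤ) :=
  LinearMap.funLeft ℤ ℤ Fin.castSucc

theorem stmt6 (A : ℕ → ℕ → ℤ) (c : ℕ → ℤ)
    (hA : ∀ i j, A i j = 0 ∨ A i j = 1) (hc : ∀ i, c i = 0 ∨ c i = 1)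
    (n : ℕ) (hDRS : ∀ i < n + 1, A i n = c i) :
    ∃ φ : ((Fin (n + 1) → ℤ) ⧸ LinearMap.range (1 - AtilC A c (n + 1)).mulVecLin)
        ≃ₗ[ℤ] ((Fin n → ℤ) ⧸ LinearMap.range (1 - AtilC A c n).mulVecLin),
      ∀ d : Fin (n + 1) → ℤ,
        φ (Submodule.Quotient.mk d) = Submodule.Quotient.mk (resLast n d) := by
  set M1 : Matrix (Fin (n+1)) (Fin (n+1)) ℤ := 1 - AtilC A c (n+1) with hM1
  set M0 : Matrix (Fin n) (Fin n) ℤ := 1 - AtilC A c n with hM0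
  set R : Submodule ℤ (Fin n → ℤ) := LinearMap.range M0.mulVecLin with hR
  -- last column of M1 is the last standard basis vector
  have hcol : ∀ i : Fin (n+1), M1 i (Fin.last n) = if i = Fin.last n then 1 else 0 := by
    intro i
    have h := hDRS i i.isLt
    simp [hM1, AtilC, Matrix.sub_apply, Matrix.one_apply, Fin.val_last, h]
  -- upper-left block of M1 is M0
  have hblock : ∀ (i j : Fin n), M1 i.castSucc j.castSucc = M0 i j := by
    intro i j
    simp [hM1, hM0, AtilC, Matrix.sub_apply, Matrix.one_apply, Fin.castSucc_inj]
  have hres : ∀ x : Fin (n+1) → ℤ,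
      resLast n (M1.mulVec x) = M0.mulVec (resLast n x) := by
    intro x
    funext i
    show M1.mulVec x i.castSucc = M0.mulVec (fun j => x j.castSucc) i
    simp only [Matrix.mulVec, dotProduct]
    rw [Fin.sum_univ_castSucc]
    have h0 : M1 i.castSucc (Fin.last n) = 0 := by
      rw [hcol]
      simp [Fin.ne_last_of_lt (Fin.castSucc_lt_last i)]
    rw [h0, zero_mul, add_zero]
    exact Finset.sum_congr rfl fun j _ => by rw [hblock]
  -- the induced map to the small quotient
  set f : (Fin (n+1) → ℤ) →ₗ[ℤ] ((Fin n → ℤ) ⧸ R) := R.mkQ.comp (resLast n) with hf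
  have hker : LinearMap.ker f = LinearMap.range M1.mulVecLin := by
    apply le_antisymm
    · intro v hv
      have hv' : resLast n v ∈ R := by
        simpa [hf, Submodule.Quotient.mk_eq_zero] using hv
      obtain ⟨x', hx'⟩ := hv'
      set t : ℤ := v (Fin.last n) - ∑ j : Fin n, M1 (Fin.last n) j.castSucc * x' j with ht
      refine ⟨Fin.snoc x' t, ?_⟩
      have hrs : resLast n (Fin.snoc x' t : Fin (n+1) → ℤ) = x' := by
        funext j
        simp [resLast, LinearMap.funLeft]
      funext i
      refine Fin.lastCases ?_ (fun i => ?_) i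
      · show M1.mulVec (Fin.snoc x' t) (Fin.last n) = v (Fin.last n)
        simp only [Matrix.mulVec, dotProduct]
        rw [Fin.sum_univ_castSucc]
        simp only [Fin.snoc_castSucc, Fin.snoc_last, hcol (Fin.last n), if_pos rfl, one_mul, ht,
          if_true]
        ring
      · have := congrFun (hres (Fin.snoc x' t)) i
        show M1.mulVec (Fin.snoc x' t) i.castSucc = v i.castSucc
        have hx'' : M0.mulVec x' = resLast n v := hx'
        rw [show M1.mulVec (Fin.snoc x' t) i.castSucc
            = resLast n (M1.mulVec (Fin.snoc x' t)) i from rfl, hres, hrs, hx'']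
        rfl
    · rintro v ⟨x, rfl⟩
      show f (M1.mulVec x) = 0
      simp only [hf, LinearMap.comp_apply, Submodule.mkQ_apply, Submodule.Quotient.mk_eq_zero,
        hres x]
      exact ⟨resLast n x, rfl⟩
  have hfsurj : Function.Surjective f := by
    apply Function.Surjective.comp (Submodule.mkQ_surjective R)
    exact LinearMap.funLeft_surjective_of_injective ℤ ℤ _ (Fin.castSucc_injective n)
  set ψ : ((Fin (n + 1) → ℤ) ⧸ LinearMap.range M1.mulVecLin) →ₗ[ℤ] ((Fin n → ℤ) ⧸ R) :=
    Submodule.liftQ _ f (le_of_eq hker.symm) with hψ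
  have hbij : Function.Bijective ψ := by
    constructor
    · rw [← LinearMap.ker_eq_bot]
      exact Submodule.ker_liftQ_eq_bot _ _ _ (le_of_eq hker)
    · intro y
      obtain ⟨x, hx⟩ := hfsurj y
      exact ⟨Submodule.Quotient.mk x, by simpa [hψ] using hx⟩
  refine ⟨LinearEquiv.ofBijective ψ hbij, fun d => ?_⟩
  simp [hψ, hf]
end

section
/- Let A be an n×n {0,1}-matrix, c ∈ {0,1}^n, and let Ã be the n×n integer matrix Ã(i,j) = A(i,j) − c_i. Define s : Ker([I_n − A | −C] : ℤ^{n+1} → ℤ^n) → ℤ by s(l_1,...,l_{n+1}) = Σ_{i=1}^{n+1} l_i, j : Ker(I_n − Ã) → Ker([I_n − A | −C]) by j(l_1,...,l_n) = (l_1,...,l_n, −Σ_{i=1}^n l_i), ι̂ : ℤ → Coker(I_n − Ã) by ι̂(m) = class of [I_n − A | −C] k for any k ∈ ℤ^{n+1} with Σ k_i = m, and let q : Coker(I_n − Ã) → ℤ^n/[I_n − A | −C]ℤ^{n+1} be induced by the identity on ℤ^n. Then the sequence 0 → Ker(I_n − Ã) →^j Ker([I_n − A | −C]) →^s ℤ →^{ι̂}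 Coker(I_n − Ã) →^q ℤ^n/[I_n − A | −C]ℤ^{n+1} → 0 is exact. -/
open Matrix

/-- The n×(n+1) block matrix `[I_n − A | −C]`. -/
def blockIAC (n : ℕ) (A : Matrix (Fin n) (Fin n) ℤ) (c : Fin n → ℤ) :
    Matrix (Fin n) (Fin (n + 1)) ℤ :=
  Matrix.of fun i j =>
    if h : (j : ℕ) < n then (if i = ⟨j, h⟩ then 1 else 0) - A i ⟨j, h⟩
    else -c i

/-- The n×n integer matrix `Ã` with `Ã(i,j) = A(i,j) − c_i`. -/
def Atil (n : ℕ) (A : Matrix (Fin n) (Fin n) ℤ) (c : Fin n → ℤ) :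
    Matrix (Fin n) (Fin n) ℤ :=
  Matrix.of fun i j => A i j - c i

/-- `j(l_1,…,l_n) = (l_1,…,l_n, −Σ l_i)`. -/
def jmap (n : ℕ) (l : Fin n → ℤ) : Fin (n + 1) → ℤ :=
  Fin.snoc l (-(∑ i, l i))

/-- `ι̂(m)` is the class of `[I_n − A | −C] k` in `Coker(I_n − Ã)` for a
vector `k` with `Σ k_i = m` (here `k = m·e_0`). -/
def iotaHat (n : ℕ) (A : Matrix (Fin n) (Fin n) ℤ) (c : Fin n → ℤ) (m : ℤ) :
    (Fin n → ℤ) ⧸ LinearMap.range (1 - Atil n A c).mulVecLin :=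
  Submodule.Quotient.mk ((blockIAC n A c).mulVec (Pi.single (0 : Fin (n + 1)) m))

lemma blockIAC_mulVec_eq (n : ℕ) (A : Matrix (Fin n) (Fin n) ℤ) (c : Fin n → ℤ)
    (y : Fin (n + 1) → ℤ) :
    (blockIAC n A c).mulVec y =
      (1 - Atil n A c).mulVec (fun i => y i.castSucc) - (∑ i, y i) • c := by
  funext i
  simp only [mulVec, dotProduct, Pi.sub_apply, Pi.smul_apply, smul_eq_mul]
  rw [Fin.sum_univ_castSucc, Fin.sum_univ_castSucc (f := y)]
  have h2 : blockIAC n A c i (Fin.last n) = -c i := by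
    simp [blockIAC]
  have h1 : ∀ j : Fin n, ((1 : Matrix (Fin n) (Fin n) ℤ) - Atil n A c) i j * y j.castSucc
      = blockIAC n A c i j.castSucc * y j.castSucc + c i * y j.castSucc := by
    intro j
    have : blockIAC n A c i j.castSucc = (if i = j then 1 else 0) - A i j := by
      simp [blockIAC, Fin.castSucc, Fin.isLt]
    rw [this]
    simp [Atil, Matrix.one_apply]
    ring
  rw [Finset.sum_congr rfl (fun j _ => h1 j), Finset.sum_add_distrib, ← Finset.mul_sum, h2]
  ring

lemma jmap_castSucc (n : ℕ) (l : Fin n → ℤ) :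
    (fun i : Fin n => jmap n l i.castSucc) = l := by
  funext i; simp [jmap]

lemma sum_jmap (n : ℕ) (l : Fin n → ℤ) : (∑ i, jmap n l i) = 0 := by
  rw [Fin.sum_univ_castSucc]
  simp [jmap]

lemma mulVec_jmap (n : ℕ) (A : Matrix (Fin n) (Fin n) ℤ) (c : Fin n → ℤ)
    (l : Fin n → ℤ) :
    (blockIAC n A c).mulVec (jmap n l) = (1 - Atil n A c).mulVec l := by
  rw [blockIAC_mulVec_eq, jmap_castSucc, sum_jmap]
  simp

lemma sum_single (n : ℕ) (m : ℤ) : (∑ i, Pi.single (0 : Fin (n + 1)) m i) = m := by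
  simp [Finset.sum_pi_single']

theorem stmt7 (n : ℕ) (A : Matrix (Fin n) (Fin n) ℤ) (c : Fin n → ℤ)
    (hA : ∀ i j, A i j = 0 ∨ A i j = 1) (hc : ∀ i, c i = 0 ∨ c i = 1) :
    -- `j` maps `Ker(I_n − Ã)` into `Ker([I_n − A | −C])`
    (∀ l : Fin n → ℤ, (1 - Atil n A c).mulVec l = 0 →
      (blockIAC n A c).mulVec (jmap n l) = 0) ∧
    -- exactness at `Ker(I_n − Ã)`: `j` is injective
    (∀ l : Fin n → ℤ, (1 - Atil n A c).mulVec l = 0 → jmap n l = 0 → l = 0) ∧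
    -- exactness at `Ker([I_n − A | −C])`: `Ker s = Im j`
    (∀ y : Fin (n + 1) → ℤ, (blockIAC n A c).mulVec y = 0 →
      ((∑ i, y i) = 0 ↔
        ∃ l : Fin n → ℤ, (1 - Atil n A c).mulVec l = 0 ∧ jmap n l = y)) ∧
    -- `ι̂` is well defined: the class of `[I_n − A | −C] k` depends only on `Σ k_i`
    (∀ k k' : Fin (n + 1) → ℤ, (∑ i, k i) = (∑ i, k' i) →
      (Submodule.Quotient.mk ((blockIAC n A c).mulVec k) :
          (Fin n → ℤ) ⧸ LinearMap.range (1 - Atil n A c).mulVecLin) =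
        Submodule.Quotient.mk ((blockIAC n A c).mulVec k')) ∧
    -- exactness at `ℤ`: `Ker ι̂ = Im s`
    (∀ m : ℤ, iotaHat n A c m = 0 ↔
      ∃ y : Fin (n + 1) → ℤ, (blockIAC n A c).mulVec y = 0 ∧ (∑ i, y i) = m) ∧
    -- exactness at `Coker(I_n − Ã)`: `Ker q = Im ι̂`
    (∀ x : Fin n → ℤ,
      ((Submodule.Quotient.mk x :
          (Fin n → ℤ) ⧸ LinearMap.range (blockIAC n A c).mulVecLin) = 0 ↔
        ∃ m : ℤ, (Submodule.Quotient.mk x :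
          (Fin n → ℤ) ⧸ LinearMap.range (1 - Atil n A c).mulVecLin)
            = iotaHat n A c m)) ∧
    -- exactness at `ℤ^n/[I_n − A | −C]ℤ^{n+1}`: `q` is surjective
    (∀ w : (Fin n → ℤ) ⧸ LinearMap.range (blockIAC n A c).mulVecLin,
      ∃ x : Fin n → ℤ, Submodule.Quotient.mk x = w) := by
  have h4 : ∀ k k' : Fin (n + 1) → ℤ, (∑ i, k i) = (∑ i, k' i) →
      (Submodule.Quotient.mk ((blockIAC n A c).mulVec k) :
          (Fin n → ℤ) ⧸ LinearMap.range (1 - Atil n A c).mulVecLin) =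
        Submodule.Quotient.mk ((blockIAC n A c).mulVec k') := by
    intro k k' h
    rw [Submodule.Quotient.eq]
    refine ⟨(fun i => k i.castSucc) - (fun i => k' i.castSucc), ?_⟩
    rw [mulVecLin_apply, Matrix.mulVec_sub, blockIAC_mulVec_eq n A c k,
      blockIAC_mulVec_eq n A c k', h]
    abel
  refine ⟨?_, ?_, ?_, h4, ?_, ?_, ?_⟩
  · intro l hl
    rw [mulVec_jmap, hl]
  · intro l _ h
    funext i
    have := congrFun h i.castSucc
    simpa [jmap] using this
  · intro y hy
    constructor
    · intro hs
      refine ⟨fun i => y i.castSucc, ?_, ?_⟩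
      · have := blockIAC_mulVec_eq n A c y
        rw [hy, hs] at this
        simpa using this.symm
      · have hlast : -(∑ i : Fin n, y i.castSucc) = y (Fin.last n) := by
          rw [Fin.sum_univ_castSucc] at hs
          linarith
        funext i
        refine Fin.lastCases ?_ ?_ i
        · simpa [jmap] using hlast
        · intro i; simp [jmap]
    · rintro ⟨l, hl, rfl⟩
      exact sum_jmap n l
  · intro m
    rw [iotaHat, Submodule.Quotient.mk_eq_zero]
    constructor
    · intro hmem
      rw [LinearMap.mem_range] at hmem
      obtain ⟨v, hv⟩ := hmem
      rw [mulVecLin_apply] at hv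
      refine ⟨Pi.single (0 : Fin (n + 1)) m - jmap n v, ?_, ?_⟩
      · rw [Matrix.mulVec_sub, mulVec_jmap, hv, sub_self]
      · simp only [Pi.sub_apply, Finset.sum_sub_distrib, sum_single, sum_jmap, sub_zero]
    · rintro ⟨y, hy, hsum⟩
      rw [LinearMap.mem_range]
      refine ⟨fun i => (Pi.single (0 : Fin (n + 1)) m : Fin (n + 1) → ℤ) i.castSucc - y i.castSucc, ?_⟩
      rw [mulVecLin_apply]
      have hk := blockIAC_mulVec_eq n A c (Pi.single (0 : Fin (n + 1)) m - y)
      simp only [Pi.sub_apply, Finset.sum_sub_distrib] at hk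
      rw [Matrix.mulVec_sub, hy, sub_zero, sum_single, hsum,
        sub_self, zero_smul, sub_zero] at hk
      exact hk.symm
  · intro x
    rw [Submodule.Quotient.mk_eq_zero, LinearMap.mem_range]
    constructor
    · rintro ⟨k, hk⟩
      rw [mulVecLin_apply] at hk
      refine ⟨∑ i, k i, ?_⟩
      rw [iotaHat, ← hk]
      exact h4 k _ (by rw [sum_single])
    · rintro ⟨m, hm⟩
      rw [iotaHat, Submodule.Quotient.eq] at hm
      obtain ⟨v, hv⟩ := hm
      rw [mulVecLin_apply] at hv
      refine ⟨Pi.single (0 : Fin (n + 1)) m + jmap n v, ?_⟩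
      rw [mulVecLin_apply, Matrix.mulVec_add, mulVec_jmap, hv]
      abel
  · intro w
    exact ⟨Quotient.out w, by simp [Submodule.Quotient.mk]⟩
end

section
/- Let A be an n×n {0,1}-matrix, c ∈ {0,1}^n, Ã(i,j) = A(i,j) − c_i, and define the (n+2)×(n+2) integer matrix A_{C_n} by: its upper-left n×n block is A, its (i, n+1) entry is c_i and (i, n+2) entry is 0 for i ≤ n, its (n+1)st row is (1,...,1,1,1), and its (n+2)nd row is (0,...,0,1,0). Then there is a group isomorphism Coker(I_n − Ã) ≅ Coker(I_{n+2} − A_{C_n}) carrying the class of −C_n = (−c_1,...,−c_n) to the class of (−c_1,...,−c_n, 0, 0), and a group isomorphism Ker(I_n − Ã) ≅ Ker(I_{n+2} − A_{C_n}). -/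
open Matrix

/-- The (n+2)×(n+2) matrix `A_{C_n}`: upper-left n×n block `A`, then for
`i ≤ n` the (i,n+1) entry is `c_i` and the (i,n+2) entry is `0`; the
(n+1)st row is all 1's and the (n+2)nd row is `(0,…,0,1,0)`.
(All indices 0-based in the formalization.) -/
def ACn (n : ℕ) (A : Matrix (Fin n) (Fin n) ℤ) (c : Fin n → ℤ) :
    Matrix (Fin (n + 2)) (Fin (n + 2)) ℤ :=
  Matrix.of fun i j =>
    if hi : (i : ℕ) < n then
      (if hj : (j : ℕ) < n then A ⟨i, hi⟩ ⟨j, hj⟩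
       else if (j : ℕ) = n then c ⟨i, hi⟩ else 0)
    else if (i : ℕ) = n then 1
    else (if (j : ℕ) = n then 1 else 0)

/-- The vector `(−c_1,…,−c_n,0,0) ∈ ℤ^{n+2}`. -/
def negCvec (n : ℕ) (c : Fin n → ℤ) : Fin (n + 2) → ℤ :=
  fun k => if h : (k : ℕ) < n then -c ⟨k, h⟩ else 0

/-!
Write `v ∈ ℤ^(n+2)` as `(y, s, t)` with `y ∈ ℤ^n`. Then
`(I - A_{C_n}) (y, s, t) = ((I - A) y - s c, -∑ y - t, t - s)` and `(I - Ã) x = (I - A) x + (∑ x) c`.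
So `x ↦ (x, -∑ x, -∑ x)` intertwines `I - Ã` with `I - A_{C_n}` up to padding by zeros and maps
`Ker (I - Ã)` onto `Ker (I - A_{C_n})`. On cokernels, padding by zeros is inverse to the retraction
`(y, s, t) ↦ y - (s + t) c` modulo the images, because
`(y - (s + t) c, 0, 0) - (y, s, t) = (I - A_{C_n}) (0, s + t, s)`.
-/

namespace Submodule

variable {R P Q : Type*} [Ring R] [AddCommGroup P] [Module R P] [AddCommGroup Q] [Module R Q]
  {S : Submodule R P} {T : Submodule R Q}

def quotientEquivOfInverseModulo (f : P →ₗ[R] Q) (g : Q →ₗ[R] P) (hf : S ≤ T.comap f)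
    (hg : T ≤ S.comap g) (hgf : ∀ x, g (f x) - x ∈ S) (hfg : ∀ y, f (g y) - y ∈ T) :
    (P ⧸ S) ≃ₗ[R] (Q ⧸ T) :=
  LinearEquiv.ofLinearMap (S.mapQ T f hf) (T.mapQ S g hg)
    (linearMap_qext _ <| LinearMap.ext fun y => (Quotient.eq T).mpr (hfg y))
    (linearMap_qext _ <| LinearMap.ext fun x => (Quotient.eq S).mpr (hgf x))

@[simp]
theorem quotientEquivOfInverseModulo_mk (f : P →ₗ[R] Q) (g : Q →ₗ[R] P) (hf : S ≤ T.comap f)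
    (hg : T ≤ S.comap g) (hgf : ∀ x, g (f x) - x ∈ S) (hfg : ∀ y, f (g y) - y ∈ T) (x : P) :
    quotientEquivOfInverseModulo f g hf hg hgf hfg (Quotient.mk x) = Quotient.mk (f x) :=
  rfl

end Submodule

theorem Fin.append_add {α : Type*} [Add α] {m k : ℕ} (u u' : Fin m → α) (v v' : Fin k → α) :
    Fin.append (u + u') (v + v') = Fin.append u v + Fin.append u' v' := by
  ext i; refine Fin.addCases (fun i => ?_) (fun i => ?_) i <;> simp

theorem Fin.append_smul {M α : Type*} [SMul M α] {m k : ℕ} (r : M) (u : Fin m → α)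
    (v : Fin k → α) : Fin.append (r • u) (r • v) = r • Fin.append u v := by
  ext i; refine Fin.addCases (fun i => ?_) (fun i => ?_) i <;> simp

theorem Fin.append_sub {α : Type*} [Sub α] {m k : ℕ} (u u' : Fin m → α) (v v' : Fin k → α) :
    Fin.append (u - u') (v - v') = Fin.append u v - Fin.append u' v' := by
  ext i; refine Fin.addCases (fun i => ?_) (fun i => ?_) i <;> simp

theorem Fin.exists_eq_append_vec2 {α : Type*} {n : ℕ} (v : Fin (n + 2) → α) :
    ∃ y s t, v = Fin.append y ![s, t] :=
  ⟨fun i => v (Fin.castAdd 2 i), v (Fin.natAdd n 0), v (Fin.natAdd n 1), by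
    ext i
    refine Fin.addCases (fun i => ?_) (fun k => ?_) i
    · simp
    · fin_cases k <;> simp⟩

section

variable (n : ℕ)

def appendZero : (Fin n → ℤ) →ₗ[ℤ] (Fin (n + 2) → ℤ) where
  toFun x := Fin.append x ![0, 0]
  map_add' x y := by rw [← Fin.append_add]; simp
  map_smul' m x := by rw [RingHom.id_apply, ← Fin.append_smul]; simp

def appendNegSum : (Fin n → ℤ) →ₗ[ℤ] (Fin (n + 2) → ℤ) where
  toFun x := Fin.append x ![-∑ j, x j, -∑ j, x j]
  map_add' x y := by rw [← Fin.append_add]; simp [Finset.sum_add_distrib, add_comm]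
  map_smul' m x := by rw [RingHom.id_apply, ← Fin.append_smul]; simp [Finset.mul_sum]

variable {n} (c : Fin n → ℤ)

def retractACn : (Fin (n + 2) → ℤ) →ₗ[ℤ] (Fin n → ℤ) where
  toFun v := fun i => v (Fin.castAdd 2 i) - (v (Fin.natAdd n 0) + v (Fin.natAdd n 1)) * c i
  map_add' v w := by ext i; simp; ring
  map_smul' m v := by ext i; simp; ring

@[simp] theorem retractACn_append (y : Fin n → ℤ) (s t : ℤ) :
    retractACn c (Fin.append y ![s, t]) = y - (s + t) • c := by
  ext i; simp [retractACn]

end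

section

variable {n : ℕ} (A : Matrix (Fin n) (Fin n) ℤ) (c : Fin n → ℤ)

@[simp] theorem ACn_castAdd_castAdd (i j : Fin n) :
    ACn n A c (Fin.castAdd 2 i) (Fin.castAdd 2 j) = A i j := by
  simp [ACn]

@[simp] theorem ACn_castAdd_natAdd (i : Fin n) (k : Fin 2) :
    ACn n A c (Fin.castAdd 2 i) (Fin.natAdd n k) = ![c i, 0] k := by
  fin_cases k <;> simp [ACn]

@[simp] theorem ACn_natAdd_castAdd (k : Fin 2) (j : Fin n) :
    ACn n A c (Fin.natAdd n k) (Fin.castAdd 2 j) = ![1, 0] k := by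
  fin_cases k <;> simp [ACn, j.isLt.ne]

@[simp] theorem ACn_natAdd_natAdd (k l : Fin 2) :
    ACn n A c (Fin.natAdd n k) (Fin.natAdd n l) = !![1, 1; 1, 0] k l := by
  fin_cases k <;> fin_cases l <;> simp [ACn]

theorem ACn_mulVec_append (y : Fin n → ℤ) (s t : ℤ) :
    ACn n A c *ᵥ Fin.append y ![s, t] =
      Fin.append (A *ᵥ y + s • c) ![∑ j, y j + s + t, s] := by
  ext i
  refine Fin.addCases (fun i => ?_) (fun k => ?_) i
  · simp [mulVec, dotProduct, Fin.sum_univ_add, mul_comm]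
  · fin_cases k <;> simp [mulVec, dotProduct, Fin.sum_univ_add, add_assoc]

theorem one_sub_ACn_mulVec_append (y : Fin n → ℤ) (s t : ℤ) :
    (1 - ACn n A c) *ᵥ Fin.append y ![s, t] =
      Fin.append ((1 - A) *ᵥ y - s • c) ![-∑ j, y j - t, t - s] := by
  rw [sub_mulVec, one_mulVec, ACn_mulVec_append, sub_mulVec, one_mulVec, ← Fin.append_sub]
  simp only [cons_sub_cons, sub_add_eq_sub_sub, empty_sub_empty]
  congr 3
  ring

theorem one_sub_Atil_mulVec (x : Fin n → ℤ) :
    (1 - Atil n A c) *ᵥ x = (1 - A) *ᵥ x + (∑ j, x j) • c := by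
  rw [sub_mulVec, one_mulVec, sub_mulVec, one_mulVec]
  ext i
  simp only [Pi.sub_apply, Pi.add_apply, Pi.smul_apply, mulVec, dotProduct, Atil, of_apply,
    sub_mul, Finset.sum_sub_distrib, Finset.sum_mul, smul_eq_mul]
  ring_nf

theorem one_sub_ACn_mulVec_appendNegSum (x : Fin n → ℤ) :
    (1 - ACn n A c) *ᵥ appendNegSum n x = appendZero n ((1 - Atil n A c) *ᵥ x) := by
  simp [appendNegSum, appendZero, one_sub_ACn_mulVec_append, one_sub_Atil_mulVec]

theorem range_one_sub_Atil_le_comap_appendZero :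
    LinearMap.range (1 - Atil n A c).mulVecLin ≤
      (LinearMap.range (1 - ACn n A c).mulVecLin).comap (appendZero n) := by
  rintro _ ⟨x, rfl⟩
  exact ⟨appendNegSum n x, one_sub_ACn_mulVec_appendNegSum A c x⟩

theorem range_one_sub_ACn_le_comap_retractACn :
    LinearMap.range (1 - ACn n A c).mulVecLin ≤
      (LinearMap.range (1 - Atil n A c).mulVecLin).comap (retractACn c) := by
  rintro _ ⟨v, rfl⟩
  obtain ⟨y, s, t, rfl⟩ := Fin.exists_eq_append_vec2 v
  refine ⟨y, ?_⟩
  simp only [mulVecLin_apply, one_sub_ACn_mulVec_append, retractACn_append, one_sub_Atil_mulVec]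
  module

theorem retractACn_appendZero (x : Fin n → ℤ) : retractACn c (appendZero n x) = x := by
  simp [appendZero]

theorem appendZero_retractACn_sub_mem_range (v : Fin (n + 2) → ℤ) :
    appendZero n (retractACn c v) - v ∈ LinearMap.range (1 - ACn n A c).mulVecLin := by
  obtain ⟨y, s, t, rfl⟩ := Fin.exists_eq_append_vec2 v
  refine ⟨Fin.append 0 ![s + t, s], ?_⟩
  rw [mulVecLin_apply, one_sub_ACn_mulVec_append, retractACn_append]
  simp [appendZero, ← Fin.append_sub]

theorem appendNegSum_injective : Function.Injective (appendNegSum n) := fun x y h => by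
  ext i
  simpa [appendNegSum] using congrFun h (Fin.castAdd 2 i)

theorem ker_one_sub_ACn : LinearMap.ker (1 - ACn n A c).mulVecLin =
    (LinearMap.ker (1 - Atil n A c).mulVecLin).map (appendNegSum n) := by
  ext v
  simp only [LinearMap.mem_ker, mulVecLin_apply, Submodule.mem_map]
  constructor
  · obtain ⟨y, s, t, rfl⟩ := Fin.exists_eq_append_vec2 v
    intro hv
    rw [one_sub_ACn_mulVec_append] at hv
    have hy : (1 - A) *ᵥ y = s • c := by
      ext i; simpa [sub_eq_zero] using congrFun hv (Fin.castAdd 2 i)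
    have ht : t = -∑ j, y j := by
      have h := congrFun hv (Fin.natAdd n 0)
      simp only [Fin.append_right, cons_val_zero, Pi.zero_apply] at h
      linarith
    have hs : s = t := by simpa [sub_eq_zero, eq_comm] using congrFun hv (Fin.natAdd n 1)
    refine ⟨y, ?_, ?_⟩
    · rw [one_sub_Atil_mulVec, hy, hs, ht]; module
    · simp [appendNegSum, hs, ht]
  · rintro ⟨x, hx, rfl⟩
    rw [one_sub_ACn_mulVec_appendNegSum, hx, map_zero]

theorem appendZero_neg : appendZero n (-c) = negCvec n c := by
  ext k
  refine Fin.addCases (fun i => ?_) (fun i => ?_) k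
  · simp [appendZero, negCvec]
  · fin_cases i <;> simp [appendZero, negCvec]

end

theorem stmt8_general (n : ℕ) (A : Matrix (Fin n) (Fin n) ℤ) (c : Fin n → ℤ) :
    (∃ e : ((Fin n → ℤ) ⧸ LinearMap.range (1 - Atil n A c).mulVecLin) ≃ₗ[ℤ]
        ((Fin (n + 2) → ℤ) ⧸ LinearMap.range (1 - ACn n A c).mulVecLin),
      e (Submodule.Quotient.mk (fun i => -c i)) =
        Submodule.Quotient.mk (negCvec n c)) ∧
    Nonempty (LinearMap.ker (1 - Atil n A c).mulVecLin ≃ₗ[ℤ]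
      LinearMap.ker (1 - ACn n A c).mulVecLin) := by
  refine ⟨⟨Submodule.quotientEquivOfInverseModulo (appendZero n) (retractACn c)
      (range_one_sub_Atil_le_comap_appendZero A c) (range_one_sub_ACn_le_comap_retractACn A c)
      (by simp [retractACn_appendZero]) (appendZero_retractACn_sub_mem_range A c), ?_⟩, ⟨?_⟩⟩
  · rw [Submodule.quotientEquivOfInverseModulo_mk]
    exact congrArg _ (appendZero_neg c)
  · exact (Submodule.equivMapOfInjective _ appendNegSum_injective _).trans
      (LinearEquiv.ofEq _ _ (ker_one_sub_ACn A c).symm)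

theorem stmt8 (n : ℕ) (A : Matrix (Fin n) (Fin n) ℤ) (c : Fin n → ℤ)
    (hA : ∀ i j, A i j = 0 ∨ A i j = 1) (hc : ∀ i, c i = 0 ∨ c i = 1) :
    (∃ e : ((Fin n → ℤ) ⧸ LinearMap.range (1 - Atil n A c).mulVecLin) ≃ₗ[ℤ]
        ((Fin (n + 2) → ℤ) ⧸ LinearMap.range (1 - ACn n A c).mulVecLin),
      e (Submodule.Quotient.mk (fun i => -c i)) =
        Submodule.Quotient.mk (negCvec n c)) ∧
    Nonempty (LinearMap.ker (1 - Atil n A c).mulVecLin ≃ₗ[ℤ]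
      LinearMap.ker (1 - ACn n A c).mulVecLin) :=
  stmt8_general n A c
end

section
/- Let A be an n×n {0,1}-matrix and c ∈ {0,1}^n. Define the (n+2)×(n+2) matrix A_{C_n} with upper-left block A, (i,n+1) entry c_i and (i,n+2) entry 0 for i ≤ n, row n+1 all ones, and row n+2 equal to (0,...,0,1,0). Define the (n+2)×(n+2) matrix Â_{C_n} with upper-left block A^t, (i,n+1) entry 1 and (i,n+2) entry 0 for i ≤ n, row n+1 all ones, and row n+2 equal to (c_1,...,c_n,1,1). Then there is a group isomorphism (Coker(I_{n+2} − A_{C_n}), class of (−c_1,...,−c_n,0,0)) ≅ (Coker(I_{n+2} − (Â_{C_n})^t), class of (1,1,...,1)), i.e. an isomorphism of the cokernels taking the first distinguished class to the second; moreover Ker(I_{n+2} − A_{C_n}) ≅ Ker(I_{n+2} − (Â_{C_n})^t). -/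
/-!
Both matrices are related by elementary operations over `ℤ`: adding `1 - c_i` times the last row
to row `i` (for `i ≤ n`), then adding column `n + 1` to column `n + 2`, turns `I - A_{C_n}` into
`I - (Â_{C_n})ᵀ`. An equivalence `P M Q = N` with `P`, `Q` invertible induces `x ↦ P x` on
cokernels and `Q⁻¹` on kernels. Here `P` fixes `(-c, 0, 0)`, and `(-c, 0, 0) - (1, …, 1)` is the
image under `N` of `e_{n+1} + e_{n+2}`.
-/

open Matrix
/-- The (n+2)×(n+2) matrix `Â_{C_n}`: upper-left n×n block `A^t`, then for
`i ≤ n` the (i,n+1) entry is `1` and the (i,n+2) entry is `0`; the (n+1)st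
row is all 1's and the (n+2)nd row is `(c_1,…,c_n,1,1)`. -/
def AhatCn (n : ℕ) (A : Matrix (Fin n) (Fin n) ℤ) (c : Fin n → ℤ) :
    Matrix (Fin (n + 2)) (Fin (n + 2)) ℤ :=
  Matrix.of fun i j =>
    if hi : (i : ℕ) < n then
      (if hj : (j : ℕ) < n then A ⟨j, hj⟩ ⟨i, hi⟩
       else if (j : ℕ) = n then 1 else 0)
    else if (i : ℕ) = n then 1
    else (if hj : (j : ℕ) < n then c ⟨j, hj⟩ else 1)

namespace Matrix

open LinearMap

variable {ι R : Type*} [Fintype ι] [DecidableEq ι] [CommRing R]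

theorem isUnit_one_add_vecMulVec {u w : ι → R} (h : w ⬝ᵥ u = 0) : IsUnit (1 + vecMulVec u w) :=
  IsNilpotent.isUnit_one_add ⟨2, by rw [sq, vecMulVec_mul_vecMulVec, h, zero_smul]; simp⟩

theorem isUnit_transvection {i j : ι} (h : i ≠ j) (c : R) : IsUnit (transvection i j c) :=
  (isUnit_iff_isUnit_det _).mpr (by rw [det_transvection_of_ne _ _ h]; exact isUnit_one)

variable {M N P Q : Matrix ι ι R}

theorem map_range_mulVecLin_eq_of_mul_mul (hQ : IsUnit Q) (h : P * M * Q = N) :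
    (range M.mulVecLin).map P.mulVecLin = range N.mulVecLin := by
  rw [← h, mulVecLin_mul, mulVecLin_mul, range_comp_of_range_eq_top _
    (range_eq_top.mpr (mulVec_surjective_iff_isUnit.mpr hQ)), range_comp]

theorem ker_mulVecLin_eq_of_mul_mul (hP : IsUnit P) (h : P * M * Q = N) :
    ker N.mulVecLin = (ker M.mulVecLin).comap Q.mulVecLin := by
  rw [← h, mulVecLin_mul, mulVecLin_mul, ker_comp, ker_comp_of_ker_eq_bot _
    (ker_eq_bot.mpr (mulVec_injective_of_isUnit hP))]

theorem exists_quotRangeEquiv_of_mul_mul (hP : IsUnit P) (hQ : IsUnit Q) (h : P * M * Q = N) :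
    ∃ e : ((ι → R) ⧸ range M.mulVecLin) ≃ₗ[R] ((ι → R) ⧸ range N.mulVecLin),
      ∀ x, e (Submodule.Quotient.mk x) = Submodule.Quotient.mk (P *ᵥ x) :=
  ⟨Submodule.Quotient.equiv _ _ (P.toLinearEquiv' hP.invertible)
    (map_range_mulVecLin_eq_of_mul_mul hQ h), fun _ => rfl⟩

theorem nonempty_kerEquiv_of_mul_mul (hP : IsUnit P) (hQ : IsUnit Q) (h : P * M * Q = N) :
    Nonempty (ker M.mulVecLin ≃ₗ[R] ker N.mulVecLin) := by
  let e := Q.toLinearEquiv' hQ.invertible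
  have hker : (ker M.mulVecLin).map (e.symm : (ι → R) →ₗ[R] ι → R) = ker N.mulVecLin := by
    rw [ker_mulVecLin_eq_of_mul_mul hP h, ← Submodule.comap_equiv_eq_map_symm]
    rfl
  exact ⟨(e.symm.submoduleMap _).trans (LinearEquiv.ofEq _ _ hker)⟩

end Matrix

def oneSubCvec (n : ℕ) (c : Fin n → ℤ) : Fin (n + 2) → ℤ :=
  fun k => if h : (k : ℕ) < n then 1 - c ⟨k, h⟩ else 0

section

variable (n : ℕ) (A : Matrix (Fin n) (Fin n) ℤ) (c : Fin n → ℤ)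

theorem isUnit_one_add_vecMulVec_oneSubCvec :
    IsUnit (1 + vecMulVec (oneSubCvec n c) (Pi.single (Fin.last (n + 1)) 1)) :=
  isUnit_one_add_vecMulVec (by simp [oneSubCvec])

theorem one_add_vecMulVec_oneSubCvec_mulVec_negCvec :
    (1 + vecMulVec (oneSubCvec n c) (Pi.single (Fin.last (n + 1)) 1)) *ᵥ negCvec n c =
      negCvec n c := by
  simp [add_mulVec, vecMulVec_mulVec, negCvec]

theorem one_add_vecMulVec_mul_one_sub_ACn_mul_transvection :
    (1 + vecMulVec (oneSubCvec n c) (Pi.single (Fin.last (n + 1)) 1)) * (1 - ACn n A c) *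
      transvection (Fin.last n).castSucc (Fin.last (n + 1)) 1 = 1 - (AhatCn n A c)ᵀ := by
  rw [Matrix.add_mul, Matrix.one_mul, vecMulVec_mul, single_one_vecMul]
  ext a b
  induction b using Fin.lastCases with
  | last =>
    rw [mul_transvection_apply_same]
    refine Fin.lastCases ?_ (Fin.lastCases ?_ fun a => ?_) a <;>
      simp [ACn, AhatCn, oneSubCvec, one_apply, vecMulVec_apply, (Fin.castSucc_ne_last _).symm]
    ring
  | cast b =>
    rw [mul_transvection_apply_of_ne (hb := Fin.castSucc_ne_last b)]
    refine Fin.lastCases ?_ (Fin.lastCases ?_ fun a => ?_) a <;>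
      refine Fin.lastCases ?_ (fun b => ?_) b <;>
      simp [ACn, AhatCn, oneSubCvec, one_apply, vecMulVec_apply, (Fin.castSucc_ne_last _).symm,
        b.isLt.ne]
    ring

theorem negCvec_sub_one_mem_range_one_sub_AhatCn_transpose :
    negCvec n c - 1 ∈ LinearMap.range (1 - (AhatCn n A c)ᵀ).mulVecLin := by
  refine ⟨Pi.single (Fin.last n).castSucc 1 + Pi.single (Fin.last (n + 1)) 1, ?_⟩
  ext i
  refine Fin.lastCases ?_ (Fin.lastCases ?_ fun i => ?_) i <;>
    simp [AhatCn, negCvec, (Fin.castSucc_ne_last _).symm]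
  ring

end

theorem stmt10_general (n : ℕ) (A : Matrix (Fin n) (Fin n) ℤ) (c : Fin n → ℤ) :
    (∃ e : ((Fin (n + 2) → ℤ) ⧸ LinearMap.range (1 - ACn n A c).mulVecLin) ≃ₗ[ℤ]
        ((Fin (n + 2) → ℤ) ⧸ LinearMap.range (1 - (AhatCn n A c)ᵀ).mulVecLin),
      e (Submodule.Quotient.mk (negCvec n c)) =
        Submodule.Quotient.mk (fun _ => 1)) ∧
    Nonempty (LinearMap.ker (1 - ACn n A c).mulVecLin ≃ₗ[ℤ]
      LinearMap.ker (1 - (AhatCn n A c)ᵀ).mulVecLin) := by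
  have hP := isUnit_one_add_vecMulVec_oneSubCvec n c
  have hQ := isUnit_transvection (Fin.castSucc_ne_last (Fin.last n)) (1 : ℤ)
  have key := one_add_vecMulVec_mul_one_sub_ACn_mul_transvection n A c
  obtain ⟨e, he⟩ := exists_quotRangeEquiv_of_mul_mul hP hQ key
  refine ⟨⟨e, ?_⟩, nonempty_kerEquiv_of_mul_mul hP hQ key⟩
  rw [he, one_add_vecMulVec_oneSubCvec_mulVec_negCvec, Submodule.Quotient.eq]
  exact negCvec_sub_one_mem_range_one_sub_AhatCn_transpose n A c

theorem stmt10 (n : ℕ) (A : Matrix (Fin n) (Fin n) ℤ) (c : Fin n → ℤ)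
    (hA : ∀ i j, A i j = 0 ∨ A i j = 1) (hc : ∀ i, c i = 0 ∨ c i = 1) :
    (∃ e : ((Fin (n + 2) → ℤ) ⧸ LinearMap.range (1 - ACn n A c).mulVecLin) ≃ₗ[ℤ]
        ((Fin (n + 2) → ℤ) ⧸ LinearMap.range (1 - (AhatCn n A c)ᵀ).mulVecLin),
      e (Submodule.Quotient.mk (negCvec n c)) =
        Submodule.Quotient.mk (fun _ => 1)) ∧
    Nonempty (LinearMap.ker (1 - ACn n A c).mulVecLin ≃ₗ[ℤ]
      LinearMap.ker (1 - (AhatCn n A c)ᵀ).mulVecLin) :=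
  stmt10_general n A c
end

section
/- Let A be an N×N {0,1}-matrix. Define the (N+3)×(N+3) {0,1}-matrix B̂ by: rows 1,...,N are (A(i,1),...,A(i,N), 1, 1, 0); row N+1 is (1,...,1,1,1,0); row N+2 is (1,...,1,1,1,1); row N+3 is (0,...,0,1,1,1). Then det(I_{N+3} − B̂) = −det(I_N − A). -/
open Matrix

/-- The (N+3)×(N+3) {0,1}-matrix `B̂`: rows `1,…,N` are
`(A(i,1),…,A(i,N),1,1,0)`; row `N+1` is `(1,…,1,1,1,0)`; row `N+2` is
`(1,…,1,1,1,1)`; row `N+3` is `(0,…,0,1,1,1)`.  (0-based indices here.) -/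
def BhatMat (N : ℕ) (A : Matrix (Fin N) (Fin N) ℤ) :
    Matrix (Fin (N + 3)) (Fin (N + 3)) ℤ :=
  Matrix.of fun i j =>
    if hi : (i : ℕ) < N then
      (if hj : (j : ℕ) < N then A ⟨i, hi⟩ ⟨j, hj⟩
       else if (j : ℕ) = N + 2 then 0 else 1)
    else if (i : ℕ) = N then (if (j : ℕ) = N + 2 then 0 else 1)
    else if (i : ℕ) = N + 1 then 1
    else (if (j : ℕ) < N then 0 else 1)

theorem stmt11 (N : ℕ) (A : Matrix (Fin N) (Fin N) ℤ)
    (hA : ∀ i j, A i j = 0 ∨ A i j = 1) :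
    (1 - BhatMat N A).det = -((1 : Matrix (Fin N) (Fin N) ℤ) - A).det := by
  classical
  set e : Fin N ⊕ Fin 3 ≃ Fin (N + 3) := finSumFinEquiv with he
  set D : Matrix (Fin 3) (Fin 3) ℤ := !![0,-1,0; -1,0,-1; -1,-1,0] with hD
  set D' : Matrix (Fin 3) (Fin 3) ℤ := !![1,0,-1; -1,0,0; -1,-1,1] with hD'
  have hDD' : D * D' = 1 := by decide
  have hD'D : D' * D = 1 := by decide
  haveI : Invertible D := ⟨D', hD'D, hDD'⟩
  set B : Matrix (Fin N) (Fin 3) ℤ := Matrix.of fun _ j => ![(-1 : ℤ), -1, 0] j with hB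
  set C : Matrix (Fin 3) (Fin N) ℤ := Matrix.of fun i _ => ![(-1 : ℤ), -1, 0] i with hC
  have he1 : ∀ k : Fin N, ((e (Sum.inl k)) : ℕ) = (k : ℕ) := fun k => rfl
  have he2 : ∀ k : Fin 3, ((e (Sum.inr k)) : ℕ) = N + (k : ℕ) := fun k => rfl
  have hsub : (1 - BhatMat N A).submatrix e e =
      Matrix.fromBlocks (1 - A) B C D := by
    ext i j
    cases i with
    | inl i =>
      cases j with
      | inl j =>
        simp only [submatrix_apply, fromBlocks_apply₁₁, Matrix.sub_apply, BhatMat,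
          Matrix.of_apply, Matrix.one_apply, he1]
        rw [dif_pos i.isLt, dif_pos j.isLt]
        have hij : (e (Sum.inl i) = e (Sum.inl j)) ↔ (i = j) :=
          ⟨fun h => Sum.inl.inj (e.injective h), fun h => by rw [h]⟩
        simp only [hij, Fin.eta]
      | inr j =>
        simp only [submatrix_apply, fromBlocks_apply₁₂, Matrix.sub_apply, BhatMat,
          Matrix.of_apply, Matrix.one_apply, hB, he1, he2]
        have hne : e (Sum.inl i) ≠ e (Sum.inr j) := by
          intro h; exact absurd (e.injective h) (by simp)
        rw [if_neg hne, dif_pos i.isLt, dif_neg (by omega)]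
        fin_cases j <;> norm_num <;> omega
    | inr i =>
      cases j with
      | inl j =>
        simp only [submatrix_apply, fromBlocks_apply₂₁, Matrix.sub_apply, BhatMat,
          Matrix.of_apply, Matrix.one_apply, hC, he1, he2]
        have hne : e (Sum.inr i) ≠ e (Sum.inl j) := by
          intro h; exact absurd (e.injective h) (by simp)
        rw [if_neg hne, dif_neg (by omega)]
        have hjN : (j : ℕ) < N := j.isLt
        fin_cases i <;> norm_num [hjN] <;> omega
      | inr j =>
        simp only [submatrix_apply, fromBlocks_apply₂₂, Matrix.sub_apply, BhatMat,
          Matrix.of_apply, Matrix.one_apply, hD, he2]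
        have hij : (e (Sum.inr i) = e (Sum.inr j)) ↔ (i = j) :=
          ⟨fun h => Sum.inr.inj (e.injective h), fun h => by rw [h]⟩
        rw [dif_neg (by omega)]
        simp only [hij]
        fin_cases i <;> fin_cases j <;> norm_num [he2] <;> decide
  have hinv : (⅟D : Matrix (Fin 3) (Fin 3) ℤ) = D' := invOf_eq_right_inv hDD'
  have hBC : B * ⅟D * C = 0 := by
    rw [hinv]
    ext i j
    simp [hB, hC, hD', Matrix.mul_apply, Fin.sum_univ_succ]
  have hdet : det D = -1 := by decide
  calc (1 - BhatMat N A).det = ((1 - BhatMat N A).submatrix e e).det :=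
        (det_submatrix_equiv_self e _).symm
    _ = (Matrix.fromBlocks (1 - A) B C D).det := by rw [hsub]
    _ = det D * det ((1 - A) - B * ⅟D * C) := det_fromBlocks₂₂ _ _ _ _
    _ = -((1 : Matrix (Fin N) (Fin N) ℤ) - A).det := by rw [hBC, hdet, sub_zero]; ring
end

section
/- Let A be the 3×3 matrix with rows (1,1,1),(1,1,1),(1,0,0) and B = A^t the 3×3 matrix with rows (1,1,1),(1,1,0),(1,1,0). Then ℤ³/(I₃ − A^t)ℤ³ ≅ ℤ/2ℤ and ℤ³/(I₃ − B^t)ℤ³ ≅ ℤ/2ℤ, while ℤ³/M_A ℤ⁴ = 0 and ℤ³/M_B ℤ⁴ ≅ ℤ/2ℤ, where M_A (resp. M_B) is the 3×4 matrix obtained from I₃ − A^t (resp. I₃ − B^t) by appending the column (1,1,1)^t. In particular the two pairs of groups are not isomorphic. -/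
/-!
The image of `I₃ − Aᵀ` is the kernel of the parity form `x ↦ x₀ + x₁ + x₂ mod 2`, and that of
`I₃ − Bᵀ` is the kernel of `x ↦ x₁ + x₂ mod 2`: each form kills every column (`a ᵥ* M` is even),
and explicit preimages give the reverse inclusion. Both forms are onto `ℤ/2`, whence the first
two quotients. Appending the column `𝟙 = (1,1,1)` enlarges the image by `ℤ ∙ 𝟙`. The first form
is odd on `𝟙`, so for `A` the image becomes everything; the second is even on `𝟙`, so for `B` the
image does not change. Finally a trivial group is not isomorphic to `ℤ/2`.
-/

open Matrix

def Amat : Matrix (Fin 3) (Fin 3) ℤ := !![1,1,1; 1,1,1; 1,0,0]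

def Bmat : Matrix (Fin 3) (Fin 3) ℤ := Amatᵀ

/-- The 3×4 matrix obtained from `I₃ − X^t` by appending the column `(1,1,1)^t`. -/
def appOne (X : Matrix (Fin 3) (Fin 3) ℤ) : Matrix (Fin 3) (Fin 4) ℤ :=
  Matrix.of fun i j =>
    if h : (j : ℕ) < 3 then ((1 : Matrix (Fin 3) (Fin 3) ℤ) - Xᵀ) i ⟨j, h⟩
    else 1

section ParityForm

variable {ι : Type*} [Fintype ι]

def parityForm (a : ι → ℤ) : (ι → ℤ) →ₗ[ℤ] ZMod 2 where
  toFun x := ((a ⬝ᵥ x : ℤ) : ZMod 2)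
  map_add' x y := by rw [dotProduct_add, Int.cast_add]
  map_smul' c x := by
    rw [dotProduct_smul, smul_eq_mul, Int.cast_mul, RingHom.id_apply, zsmul_eq_mul]

lemma parityForm_apply (a x : ι → ℤ) : parityForm a x = ((a ⬝ᵥ x : ℤ) : ZMod 2) := rfl

lemma mem_ker_parityForm {a x : ι → ℤ} : x ∈ LinearMap.ker (parityForm a) ↔ 2 ∣ a ⬝ᵥ x := by
  rw [LinearMap.mem_ker, parityForm_apply, ZMod.intCast_zmod_eq_zero_iff_dvd, Nat.cast_ofNat]

lemma parityForm_surjective [DecidableEq ι] {a : ι → ℤ} {i : ι} (hi : a i = 1) :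
    Function.Surjective (parityForm a) := by
  intro z
  obtain ⟨k, rfl⟩ := ZMod.intCast_surjective z
  exact ⟨Pi.single i k, by rw [parityForm_apply, dotProduct_single, hi, one_mul]⟩

lemma range_mulVecLin_le_ker_parityForm {κ : Type*} [Fintype κ] {M : Matrix ι κ ℤ}
    {a : ι → ℤ} (h : ∀ j, 2 ∣ (a ᵥ* M) j) :
    LinearMap.range M.mulVecLin ≤ LinearMap.ker (parityForm a) := by
  rintro _ ⟨y, rfl⟩
  rw [mem_ker_parityForm, mulVecLin_apply, dotProduct_mulVec]
  exact Finset.dvd_sum fun j _ => (h j).mul_right _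

end ParityForm

lemma ker_sup_span_eq_top_of_apply_eq_one {M : Type*} [AddCommGroup M] (φ : M →ₗ[ℤ] ZMod 2)
    {v : M} (hv : φ v = 1) : LinearMap.ker φ ⊔ ℤ ∙ v = ⊤ := by
  refine eq_top_iff.2 fun x _ => Submodule.mem_sup.2 ?_
  refine ⟨x - ((φ x).val : ℤ) • v, ?_, ((φ x).val : ℤ) • v,
    Submodule.smul_mem _ _ (Submodule.mem_span_singleton_self v), sub_add_cancel _ _⟩
  rw [LinearMap.mem_ker, map_sub, map_zsmul, hv, zsmul_one, Int.cast_natCast, ZMod.natCast_zmod_val,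
    sub_self]

lemma nonempty_quotient_linearEquiv_of_eq_ker {R M N : Type*} [Ring R] [AddCommGroup M]
    [Module R M] [AddCommGroup N] [Module R N] {p : Submodule R M} {f : M →ₗ[R] N}
    (hf : Function.Surjective f) (h : p = LinearMap.ker f) : Nonempty ((M ⧸ p) ≃ₗ[R] N) :=
  ⟨(Submodule.quotEquivOfEq _ _ h).trans (f.quotKerEquivOfSurjective hf)⟩

lemma appOne_apply_castSucc (X : Matrix (Fin 3) (Fin 3) ℤ) (i j : Fin 3) :
    appOne X i j.castSucc = (1 - Xᵀ) i j :=
  dif_pos j.is_lt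

lemma appOne_apply_last (X : Matrix (Fin 3) (Fin 3) ℤ) (i : Fin 3) :
    appOne X i (Fin.last 3) = 1 := by
  simp [appOne]

lemma appOne_mulVec (X : Matrix (Fin 3) (Fin 3) ℤ) (y : Fin 4 → ℤ) :
    appOne X *ᵥ y = (1 - Xᵀ) *ᵥ Fin.init y + y (Fin.last 3) • fun _ => 1 := by
  ext i
  simp only [mulVec, dotProduct, Fin.sum_univ_castSucc, appOne_apply_castSucc,
    appOne_apply_last, Pi.add_apply, Pi.smul_apply, Fin.init, smul_eq_mul, one_mul, mul_one]

lemma range_appOne (X : Matrix (Fin 3) (Fin 3) ℤ) :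
    LinearMap.range (appOne X).mulVecLin =
      LinearMap.range (1 - Xᵀ).mulVecLin ⊔ ℤ ∙ fun _ => 1 := by
  ext x
  simp only [Submodule.mem_sup, LinearMap.mem_range, Submodule.mem_span_singleton,
    mulVecLin_apply]
  constructor
  · rintro ⟨y, rfl⟩
    exact ⟨_, ⟨_, rfl⟩, _, ⟨_, rfl⟩, (appOne_mulVec X y).symm⟩
  · rintro ⟨_, ⟨u, rfl⟩, _, ⟨c, rfl⟩, rfl⟩
    refine ⟨Fin.snoc u c, ?_⟩
    rw [appOne_mulVec, Fin.init_snoc, Fin.snoc_last]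

lemma range_one_sub_Amat_transpose :
    LinearMap.range (1 - Amatᵀ).mulVecLin = LinearMap.ker (parityForm ![1, 1, 1]) := by
  refine le_antisymm (range_mulVecLin_le_ker_parityForm (by decide)) fun x hx => ?_
  obtain ⟨k, hk⟩ := mem_ker_parityForm.1 hx
  replace hk : x 0 + x 1 + x 2 = 2 * k := by simpa [dotProduct, Fin.sum_univ_three] using hk
  refine ⟨![-x 1, x 1 - k, x 2 - k], ?_⟩
  ext i
  fin_cases i <;> simp [Amat] <;> omega

lemma range_one_sub_Bmat_transpose :
    LinearMap.range (1 - Bmatᵀ).mulVecLin = LinearMap.ker (parityForm ![0, 1, 1]) := by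
  refine le_antisymm (range_mulVecLin_le_ker_parityForm (by decide)) fun x hx => ?_
  obtain ⟨k, hk⟩ := mem_ker_parityForm.1 hx
  replace hk : x 1 + x 2 = 2 * k := by simpa [dotProduct, Fin.sum_univ_three] using hk
  refine ⟨![-k, -x 0 + x 1 - k, x 2 - k], ?_⟩
  ext i
  fin_cases i <;> simp [Bmat, Amat] <;> omega

lemma range_appOne_Amat : LinearMap.range (appOne Amat).mulVecLin = ⊤ := by
  rw [range_appOne, range_one_sub_Amat_transpose]
  exact ker_sup_span_eq_top_of_apply_eq_one _ (by decide)

lemma range_appOne_Bmat :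
    LinearMap.range (appOne Bmat).mulVecLin = LinearMap.ker (parityForm ![0, 1, 1]) := by
  rw [range_appOne, range_one_sub_Bmat_transpose, sup_eq_left,
    Submodule.span_singleton_le_iff_mem, mem_ker_parityForm]
  decide

theorem stmt16 :
    -- ℤ³/(I₃ − A^t)ℤ³ ≅ ℤ/2ℤ
    Nonempty (((Fin 3 → ℤ) ⧸ LinearMap.range (1 - Amatᵀ).mulVecLin) ≃ₗ[ℤ] ZMod 2) ∧
    -- ℤ³/(I₃ − B^t)ℤ³ ≅ ℤ/2ℤ
    Nonempty (((Fin 3 → ℤ) ⧸ LinearMap.range (1 - Bmatᵀ).mulVecLin) ≃ₗ[ℤ] ZMod 2) ∧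
    -- ℤ³/M_A ℤ⁴ = 0
    LinearMap.range (appOne Amat).mulVecLin = ⊤ ∧
    -- ℤ³/M_B ℤ⁴ ≅ ℤ/2ℤ
    Nonempty (((Fin 3 → ℤ) ⧸ LinearMap.range (appOne Bmat).mulVecLin) ≃ₗ[ℤ] ZMod 2) ∧
    -- in particular the two pairs of groups are not isomorphic
    ¬ (Nonempty (((Fin 3 → ℤ) ⧸ LinearMap.range (1 - Amatᵀ).mulVecLin) ≃ₗ[ℤ]
          ((Fin 3 → ℤ) ⧸ LinearMap.range (1 - Bmatᵀ).mulVecLin)) ∧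
       Nonempty (((Fin 3 → ℤ) ⧸ LinearMap.range (appOne Amat).mulVecLin) ≃ₗ[ℤ]
          ((Fin 3 → ℤ) ⧸ LinearMap.range (appOne Bmat).mulVecLin))) := by
  have hA := nonempty_quotient_linearEquiv_of_eq_ker (parityForm_surjective (i := 0) rfl)
    range_one_sub_Amat_transpose
  have hB := nonempty_quotient_linearEquiv_of_eq_ker (parityForm_surjective (i := 1) rfl)
    range_one_sub_Bmat_transpose
  obtain ⟨eB⟩ := nonempty_quotient_linearEquiv_of_eq_ker (parityForm_surjective (i := 1) rfl)
    range_appOne_Bmat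
  refine ⟨hA, hB, range_appOne_Amat, ⟨eB⟩, ?_⟩
  rintro ⟨-, ⟨e⟩⟩
  have : Subsingleton ((Fin 3 → ℤ) ⧸ LinearMap.range (appOne Amat).mulVecLin) :=
    Submodule.Quotient.subsingleton_iff.2 range_appOne_Amat
  exact not_subsingleton (ZMod 2) (e.trans eB).symm.toEquiv.subsingleton
end

section
/- Let A be an N×N {0,1}-matrix. Let W be the (N+2)×(N+3) integer matrix defined by W(i,j) = (I_N − A^t)(i,j) for i,j ≤ N; W(i,N+1) = −1, W(i,N+2) = 0, W(i,N+3) = 0 for i ≤ N; row N+1 of W is (−1,...,−1, 0, −1, −1); row N+2 of W is (−1,...,−1, −1, 1, 0). Then ℤ^{N+2}/Wℤ^{N+3} ≅ ℤ^N / U ℤ^{N+1}, where U is the N×(N+1) matrix obtained from I_N − A^t by appending the column (1,...,1)^t. -/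
open Matrix

/-- The (N+2)×(N+3) integer matrix `W`: for `i ≤ N` its row is the `i`-th
row of `I_N − A^t` followed by `(−1, 0, 0)`; row `N+1` is
`(−1,…,−1, 0, −1, −1)`; row `N+2` is `(−1,…,−1, −1, 1, 0)`.
(0-based indices in the formalization.) -/
def Wmat (N : ℕ) (A : Matrix (Fin N) (Fin N) ℤ) :
    Matrix (Fin (N + 2)) (Fin (N + 3)) ℤ :=
  Matrix.of fun i j =>
    if hi : (i : ℕ) < N then
      (if hj : (j : ℕ) < N then
        (if (i : ℕ) = (j : ℕ) then 1 else 0) - A ⟨j, hj⟩ ⟨i, hi⟩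
       else if (j : ℕ) = N then -1 else 0)
    else if (i : ℕ) = N then
      (if (j : ℕ) < N then -1 else if (j : ℕ) = N then 0 else -1)
    else
      (if (j : ℕ) < N then -1
       else if (j : ℕ) = N then -1
       else if (j : ℕ) = N + 1 then 1 else 0)

/-- The N×(N+1) matrix `U` obtained from `I_N − A^t` by appending the
column `(1,…,1)^t`. -/
def Umat (N : ℕ) (A : Matrix (Fin N) (Fin N) ℤ) :
    Matrix (Fin N) (Fin (N + 1)) ℤ :=
  Matrix.of fun i j =>
    if hj : (j : ℕ) < N then
      (if (i : ℕ) = (j : ℕ) then 1 else 0) - A ⟨j, hj⟩ i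
    else 1


lemma sum_split (N : ℕ) (f : Fin (N+3) → ℤ) :
    ∑ j, f j = (∑ j : Fin N, f ⟨j, by omega⟩) + f ⟨N, by omega⟩ + f ⟨N+1, by omega⟩
      + f ⟨N+2, by omega⟩ := by
  rw [Fin.sum_univ_castSucc, Fin.sum_univ_castSucc, Fin.sum_univ_castSucc]
  rfl

section rows
variable (N : ℕ) (A : Matrix (Fin N) (Fin N) ℤ)

lemma Wrow_lt (v : Fin (N+3) → ℤ) (i : ℕ) (hi : i < N) :
    (Wmat N A).mulVec v ⟨i, by omega⟩ =
      (∑ j : Fin N, ((if i = (j:ℕ) then 1 else 0) - A j ⟨i, hi⟩) * v ⟨j, by omega⟩)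
        - v ⟨N, by omega⟩ := by
  unfold Matrix.mulVec dotProduct
  rw [sum_split]
  simp only [Wmat, Matrix.of_apply]
  norm_num [hi]
  ring

lemma Wrow_N (v : Fin (N+3) → ℤ) :
    (Wmat N A).mulVec v ⟨N, by omega⟩ =
      -(∑ j : Fin N, v ⟨j, by omega⟩) - v ⟨N+1, by omega⟩ - v ⟨N+2, by omega⟩ := by
  unfold Matrix.mulVec dotProduct
  rw [sum_split]
  simp only [Wmat, Matrix.of_apply]
  norm_num [Finset.sum_neg_distrib]
  ring

lemma Wrow_N1 (v : Fin (N+3) → ℤ) :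
    (Wmat N A).mulVec v ⟨N+1, by omega⟩ =
      -(∑ j : Fin N, v ⟨j, by omega⟩) - v ⟨N, by omega⟩ + v ⟨N+1, by omega⟩ := by
  unfold Matrix.mulVec dotProduct
  rw [sum_split]
  simp only [Wmat, Matrix.of_apply]
  norm_num [Finset.sum_neg_distrib]
  ring

lemma Urow (w : Fin (N+1) → ℤ) (i : Fin N) :
    (Umat N A).mulVec w i =
      (∑ j : Fin N, ((if (i:ℕ) = (j:ℕ) then 1 else 0) - A j i) * w ⟨j, by omega⟩)
        + w ⟨N, by omega⟩ := by
  unfold Matrix.mulVec dotProduct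
  rw [Fin.sum_univ_castSucc]
  simp only [Umat, Matrix.of_apply]
  norm_num
  rfl

end rows

def projL (N : ℕ) : (Fin (N+2) → ℤ) →ₗ[ℤ] (Fin N → ℤ) :=
  LinearMap.funLeft ℤ ℤ (fun i => ⟨i, by omega⟩)

lemma projL_apply (N : ℕ) (x : Fin (N+2) → ℤ) (i : Fin N) :
    projL N x i = x ⟨i, by omega⟩ := rfl

lemma projL_surj (N : ℕ) : Function.Surjective (projL N) := by
  intro y
  refine ⟨fun i => if h : (i:ℕ) < N then y ⟨i, h⟩ else 0, ?_⟩
  funext i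
  simp [projL_apply, i.isLt]

lemma range_eq (N : ℕ) (A : Matrix (Fin N) (Fin N) ℤ) :
    LinearMap.range (Wmat N A).mulVecLin
      = Submodule.comap (projL N) (LinearMap.range (Umat N A).mulVecLin) := by
  ext x
  simp only [LinearMap.mem_range, Submodule.mem_comap, Matrix.mulVecLin_apply]
  constructor
  · rintro ⟨v, rfl⟩
    refine ⟨fun j => if h : (j:ℕ) < N then v ⟨j, by omega⟩ else -v ⟨N, by omega⟩, ?_⟩
    funext i
    rw [Urow, projL_apply, Wrow_lt N A v i i.isLt]
    simp only [Fin.isLt, dite_true, Fin.eta, lt_self_iff_false, dite_false, sub_mul,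
      sub_eq_add_neg]
  · rintro ⟨w, hw⟩
    set s : ℤ := ∑ j : Fin N, w ⟨j, by omega⟩ with hs
    refine ⟨fun j => if h : (j:ℕ) < N then w ⟨j, by omega⟩
        else if (j:ℕ) = N then -w ⟨N, by omega⟩
        else if (j:ℕ) = N+1 then x ⟨N+1, by omega⟩ + s - w ⟨N, by omega⟩
        else -s - (x ⟨N+1, by omega⟩ + s - w ⟨N, by omega⟩) - x ⟨N, by omega⟩, ?_⟩
    funext i
    by_cases hi : (i:ℕ) < N
    · have hi' : i = ⟨(i:ℕ), by omega⟩ := Fin.ext rfl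
      rw [hi', Wrow_lt N A _ (i:ℕ) hi]
      have := congrFun hw ⟨(i:ℕ), hi⟩
      rw [Urow, projL_apply] at this
      simp only [Fin.isLt, dite_true]
      rw [← this]
      simp [Fin.eta, hs]
    · have hi2 : (i:ℕ) = N ∨ (i:ℕ) = N + 1 := by omega
      rcases hi2 with h | h
      · have hi' : i = ⟨N, by omega⟩ := Fin.ext h
        rw [hi', Wrow_N]
        simp only [Fin.isLt, dite_true]
        norm_num
        linarith [hs]
      · have hi' : i = ⟨N+1, by omega⟩ := Fin.ext h
        rw [hi', Wrow_N1]
        simp only [Fin.isLt, dite_true]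
        norm_num
        linarith [hs]

theorem stmt18 (N : ℕ) (A : Matrix (Fin N) (Fin N) ℤ)
    (hA : ∀ i j, A i j = 0 ∨ A i j = 1) :
    Nonempty (((Fin (N + 2) → ℤ) ⧸ LinearMap.range (Wmat N A).mulVecLin) ≃ₗ[ℤ]
      ((Fin N → ℤ) ⧸ LinearMap.range (Umat N A).mulVecLin)) := by
  set f : (Fin (N+2) → ℤ) →ₗ[ℤ] ((Fin N → ℤ) ⧸ LinearMap.range (Umat N A).mulVecLin) :=
    (Submodule.mkQ _).comp (projL N) with hf
  have hker : LinearMap.range (Wmat N A).mulVecLin = LinearMap.ker f := by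
    rw [hf, LinearMap.ker_comp, Submodule.ker_mkQ, range_eq]
  have hsurj : Function.Surjective f := by
    rw [hf]
    exact (Submodule.mkQ_surjective _).comp (projL_surj N)
  exact ⟨(Submodule.quotEquivOfEq _ _ hker).trans (f.quotKerEquivOfSurjective hsurj)⟩
end
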